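/- For every integer n ≥ 3 and every x ∈ [0,1], one has T_n(x) + x + 1 − ((2x+1)/n²)·T_n′(x) ≥ 0. Equality occurs only at x = 1 and, if n ≡ 2 (mod 4), also at x = 0. -/

import Mathlib

/-!
Put `x = cos θ` with `θ ∈ (0, π/2]`. As `T_n(cos θ) = cos nθ` and `T_n'(cos θ) sin θ = n sin nθ`,
multiplying the expression by `n sin θ > 0` turns it into
`chebGap n θ = n sin θ (cos nθ + cos θ + 1) - (2 cos θ + 1) sin nθ`,
which is positive except at `θ = π/2` when `n ≡ 2 (mod 4)`. There are three regimes.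
* `nθ ≤ 11/5`: compare Taylor polynomials of `sin` and `cos` at `θ` and at `nθ`.
* `nθ ≥ 11/5`, `cos θ ≥ 1/10`: for every `t`,
  `n sin θ cos t - (2 cos θ + 1) sin t ≥ -√(n² sin² θ + (2 cos θ + 1)²)`,
  and this is beaten by `n sin θ (1 + cos θ)`.
* `cos θ < 1/10`: write `θ = π/2 - δ` with `δ < 0.11`, so that `nθ ≡ r π/2 - nδ (mod 2π)` with
  `r = n mod 4`. The term `n cos δ sin δ ≈ nδ` dominates once `nδ` is large; for `r = 2` and
  small `nδ` the gap `n (1 - cos nδ) + nδ - (1 + 2δ) sin nδ ≈ n (nδ)² / 2 - 2δ nδ` is still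
  positive.
-/

open Polynomial

/-- The `n`-th Chebyshev polynomial of the first kind, as a real polynomial. -/
noncomputable def chebT (n : ℕ) : Polynomial ℝ := Polynomial.Chebyshev.T ℝ (n : ℤ)

open Real

lemma chebT_eval_cos (n : ℕ) (θ : ℝ) : (chebT n).eval (cos θ) = cos (n * θ) := by
  simp [chebT, Chebyshev.T_real_cos]

lemma derivative_chebT_eval_cos_mul_sin (n : ℕ) (θ : ℝ) :
    (derivative (chebT n)).eval (cos θ) * sin θ = n * sin (n * θ) := by
  rw [chebT, Chebyshev.T_derivative_eq_U, eval_mul, mul_assoc, Chebyshev.U_real_cos]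
  simp

noncomputable def chebPhi (n : ℕ) (x : ℝ) : ℝ :=
  (chebT n).eval x + x + 1 - (2 * x + 1) / (n : ℝ) ^ 2 * (derivative (chebT n)).eval x

lemma chebPhi_one {n : ℕ} (hn : n ≠ 0) : chebPhi n 1 = 0 := by
  have : (n : ℝ) ≠ 0 := by exact_mod_cast hn
  rw [chebPhi, chebT, Chebyshev.T_eval_one, Chebyshev.derivative_T_eval_one, Int.cast_natCast]
  field_simp
  ring

noncomputable def chebGap (N θ : ℝ) : ℝ :=
  N * sin θ * (cos (N * θ) + cos θ + 1) - (2 * cos θ + 1) * sin (N * θ)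

lemma chebPhi_cos_mul {n : ℕ} (hn : n ≠ 0) {θ : ℝ} (hθ : sin θ ≠ 0) :
    chebPhi n (cos θ) * (n * sin θ) = chebGap n θ := by
  have hn' : (n : ℝ) ≠ 0 := by exact_mod_cast hn
  have hD := derivative_chebT_eval_cos_mul_sin n θ
  rw [← eq_div_iff hθ] at hD
  rw [chebPhi, chebGap, chebT_eval_cos, hD]
  field_simp

lemma le_of_hasDerivAt_le {f g f' g' : ℝ → ℝ} (hf : ∀ y, HasDerivAt f (f' y) y)
    (hg : ∀ y, HasDerivAt g (g' y) y) (h₀ : f 0 ≤ g 0) (h' : ∀ y, 0 ≤ y → f' y ≤ g' y)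
    {x : ℝ} (hx : 0 ≤ x) : f x ≤ g x := by
  have hmono : MonotoneOn (g - f) (Set.Ici 0) :=
    monotoneOn_of_hasDerivWithinAt_nonneg (convex_Ici 0)
      (fun y _ => ((hg y).sub (hf y)).continuousAt.continuousWithinAt)
      (fun y _ => ((hg y).sub (hf y)).hasDerivWithinAt)
      (fun y hy => sub_nonneg.2 (h' y (interior_subset hy)))
  have := hmono Set.self_mem_Ici hx hx
  simp only [Pi.sub_apply] at this
  linarith

lemma cos_le_taylor_four {x : ℝ} (hx : 0 ≤ x) : cos x ≤ 1 - x ^ 2 / 2 + x ^ 4 / 24 :=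
  le_of_hasDerivAt_le (f' := fun y => -sin y) (g' := fun y => -y + y ^ 3 / 6) hasDerivAt_cos
    (fun y => by
      refine ((((hasDerivAt_pow 2 y).div_const 2).const_sub 1).add
        ((hasDerivAt_pow 4 y).div_const 24)).congr_deriv ?_
      norm_num; ring)
    (by simp) (fun y hy => by linarith [sin_ge_sub_cube hy]) hx

lemma sin_le_taylor_five {x : ℝ} (hx : 0 ≤ x) : sin x ≤ x - x ^ 3 / 6 + x ^ 5 / 120 :=
  le_of_hasDerivAt_le (f' := cos) (g' := fun y => 1 - y ^ 2 / 2 + y ^ 4 / 24) hasDerivAt_sin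
    (fun y => by
      refine (((hasDerivAt_id y).sub ((hasDerivAt_pow 3 y).div_const 6)).add
        ((hasDerivAt_pow 5 y).div_const 120)).congr_deriv ?_
      norm_num; ring)
    (by simp) (fun y hy => cos_le_taylor_four hy) hx

lemma taylor_six_le_cos {x : ℝ} (hx : 0 ≤ x) :
    1 - x ^ 2 / 2 + x ^ 4 / 24 - x ^ 6 / 720 ≤ cos x :=
  le_of_hasDerivAt_le (f' := fun y => -y + y ^ 3 / 6 - y ^ 5 / 120) (g' := fun y => -sin y)
    (fun y => by
      refine (((((hasDerivAt_pow 2 y).div_const 2).const_sub 1).add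
        ((hasDerivAt_pow 4 y).div_const 24)).sub
        ((hasDerivAt_pow 6 y).div_const 720)).congr_deriv ?_
      norm_num; ring)
    hasDerivAt_cos (by simp) (fun y hy => by linarith [sin_le_taylor_five hy]) hx

lemma mul_sin_lt_mul_cos_add {K b c t : ℝ} (hK : 0 < K) (hc : 0 ≤ c)
    (h : b ^ 2 < K ^ 2 * (c ^ 2 + 2 * c)) : b * sin t < K * (cos t + c + 1) := by
  have hrot : (K * cos t - b * sin t) ^ 2 < (K * (1 + c)) ^ 2 := by
    nlinarith [sq_nonneg (K * sin t + b * cos t), sin_sq_add_cos_sq t]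
  nlinarith [abs_lt_of_sq_lt_sq' hrot (by positivity)]

/-- Taylor polynomials of the two sides of `chebGap N θ > 0`, divided by `θ t`,
in the variables `u = θ²` and `s = t² = (N θ)²`. -/
lemma taylor_gap_poly_pos {u s : ℝ} (hu : 0 < u) (h9 : 9 * u ≤ s) (hs : s ≤ 121 / 25) :
    0 < s^2/60 - s^3/720 - u*s/12 + u*s^2/720 + u*s^3/4320 + u^2*s/72 - u^2*s^2/1440 := by
  have hs0 : 0 < s := by linarith
  have h1 : 0 ≤ (s/12) * (s/9 - u) := mul_nonneg (by linarith) (by linarith)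
  have h2 : 0 ≤ (s^2/1440) * (s/9 - u) * (s/9 + u) :=
    mul_nonneg (mul_nonneg (by positivity) (by linarith)) (by linarith)
  have hq : 0 < 864 - 162*s - s^2 := by nlinarith [mul_nonneg hs0.le (sub_nonneg.2 hs)]
  have h3 : 0 < s^2/116640 * (864 - 162*s - s^2) := by positivity
  nlinarith [mul_pos (mul_pos hu hs0) hs0, mul_pos (mul_pos (mul_pos hu hs0) hs0) hs0]

lemma chebGap_pos_of_mul_le {N θ : ℝ} (hN : 3 ≤ N) (hθ : 0 < θ) (ht : N * θ ≤ 11 / 5) :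
    0 < chebGap N θ := by
  set t := N * θ with htdef
  have ht3 : 3 * θ ≤ t := mul_le_mul_of_nonneg_right hN hθ.le
  have ht0 : 0 < t := by linarith
  have hθu : θ ≤ 11 / 15 := by linarith
  have hts : t ^ 2 ≤ 121 / 25 := by nlinarith
  have hsin_t : sin t ≤ t - t^3/6 + t^5/120 := sin_le_taylor_five ht0.le
  have hcos_t : 1 - t^2/2 + t^4/24 - t^6/720 ≤ cos t := taylor_six_le_cos ht0.le
  have hsin_θ : θ - θ^3/6 ≤ sin θ := sin_ge_sub_cube hθ.le
  have hcos_θ : cos θ ≤ 1 - θ^2/2 + θ^4/24 := cos_le_taylor_four hθ.le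
  have hsin_θ_pos : 0 < θ - θ^3/6 := by nlinarith
  have hsum_pos : 0 < 3 - t^2/2 + t^4/24 - t^6/720 - θ^2/2 := by
    nlinarith [mul_nonneg (sub_nonneg.2 hts) (sq_nonneg t),
      mul_nonneg (mul_nonneg (sub_nonneg.2 hts) (sq_nonneg t)) (sq_nonneg t)]
  have hsin_t_nonneg : 0 ≤ sin t :=
    sin_nonneg_of_nonneg_of_le_pi ht0.le (by linarith [pi_gt_three])
  have hupper : (2 * cos θ + 1) * sin t ≤ (3 - θ^2 + θ^4/12) * (t - t^3/6 + t^5/120) :=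
    mul_le_mul (by linarith) hsin_t hsin_t_nonneg
      (by nlinarith [one_sub_sq_div_two_le_cos (x := θ)])
  have hlower : t * (θ - θ^3/6) * (3 - t^2/2 + t^4/24 - t^6/720 - θ^2/2)
      ≤ t * sin θ * (cos t + cos θ + 1) :=
    mul_le_mul (mul_le_mul_of_nonneg_left hsin_θ ht0.le)
      (by linarith [one_sub_sq_div_two_le_cos (x := θ)]) hsum_pos.le
      (mul_nonneg ht0.le (hsin_θ_pos.le.trans hsin_θ))
  have hpoly := mul_pos (mul_pos hθ ht0)
    (taylor_gap_poly_pos (by positivity : 0 < θ ^ 2) (by nlinarith) hts)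
  have hgap : θ * ((2 * cos θ + 1) * sin t) < θ * (N * sin θ * (cos t + cos θ + 1)) := by
    calc θ * ((2 * cos θ + 1) * sin t)
        ≤ θ * ((3 - θ^2 + θ^4/12) * (t - t^3/6 + t^5/120)) :=
          mul_le_mul_of_nonneg_left hupper hθ.le
      _ < t * (θ - θ^3/6) * (3 - t^2/2 + t^4/24 - t^6/720 - θ^2/2) := by linarith
      _ ≤ t * sin θ * (cos t + cos θ + 1) := hlower
      _ = θ * (N * sin θ * (cos t + cos θ + 1)) := by rw [htdef]; ring
  rw [chebGap, sub_pos]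
  exact lt_of_mul_lt_mul_left hgap hθ.le

lemma chebGap_pos_of_le_mul {N θ : ℝ} (hN : 3 ≤ N) (hθ : 0 < θ) (hθπ : θ ≤ π / 2)
    (ht : 11 / 5 ≤ N * θ) (hc : 1 / 10 ≤ cos θ) : 0 < chebGap N θ := by
  have hsin : 0 < sin θ := sin_pos_of_pos_of_lt_pi hθ (by linarith [pi_pos])
  have hK : 0 < N * sin θ := by positivity
  have hc1 : cos θ ≤ 1 := cos_le_one θ
  have hpyth : sin θ ^ 2 + cos θ ^ 2 = 1 := sin_sq_add_cos_sq θ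
  suffices h : (2 * cos θ + 1) ^ 2 < (N * sin θ) ^ 2 * (cos θ ^ 2 + 2 * cos θ) by
    rw [chebGap, sub_pos]
    exact mul_sin_lt_mul_cos_add hK (by linarith) h
  rcases le_or_gt (cos θ) (4 / 5) with hc8 | hc8
  · have hK3 : 9 * (1 - cos θ ^ 2) ≤ (N * sin θ) ^ 2 := by
      nlinarith [mul_le_mul_of_nonneg_right hN hsin.le]
    have hpoly : (2 * cos θ + 1) ^ 2 < 9 * (1 - cos θ ^ 2) * (cos θ ^ 2 + 2 * cos θ) := by
      nlinarith [mul_nonneg (sub_nonneg.2 hc) (sub_nonneg.2 hc8),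
        mul_nonneg (mul_nonneg (sub_nonneg.2 hc) (sub_nonneg.2 hc8)) (sub_nonneg.2 hc),
        mul_nonneg (mul_nonneg (sub_nonneg.2 hc) (sub_nonneg.2 hc8)) (sub_nonneg.2 hc8)]
    nlinarith [mul_le_mul_of_nonneg_right hK3 (by nlinarith : (0:ℝ) ≤ cos θ ^ 2 + 2 * cos θ)]
  · have hθ8 : θ ≤ 8 / 5 := by linarith [pi_lt_d2]
    have hθ66 : θ < 33 / 50 := by
      have := cos_le_taylor_four hθ.le
      nlinarith [mul_nonneg hθ.le (sub_nonneg.2 hθ8),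
        mul_nonneg (mul_nonneg hθ.le hθ.le) (sub_nonneg.2 hθ8)]
    have hK51 : 51 / 25 ≤ N * sin θ := by
      have h1 : N * θ * (1 - θ ^ 2 / 6) ≤ N * sin θ := by
        nlinarith [sin_ge_sub_cube hθ.le]
      nlinarith [mul_le_mul_of_nonneg_right ht (by nlinarith : (0:ℝ) ≤ 1 - θ ^ 2 / 6)]
    nlinarith [mul_le_mul hK51 hK51 (by norm_num) hK.le]

lemma cos_mul_sin_ge_sub_cube {δ : ℝ} (hδ : 0 ≤ δ) : δ - 2 * δ ^ 3 / 3 ≤ cos δ * sin δ := by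
  have h := sin_ge_sub_cube (mul_nonneg zero_le_two hδ)
  rw [sin_two_mul] at h
  linarith

lemma pi_lt_of_sin_neg {s : ℝ} (hs : 0 ≤ s) (h : sin s < 0) : π < s := by
  by_contra! hsπ
  exact (sin_nonneg_of_nonneg_of_le_pi hs hsπ).not_gt h

lemma pi_div_two_lt_of_cos_neg {s : ℝ} (hs : 0 ≤ s) (h : cos s < 0) : π / 2 < s := by
  by_contra! hsπ
  exact (cos_nonneg_of_mem_Icc ⟨by linarith [pi_pos], hsπ⟩).not_gt h

/- With `θ = π/2 - δ`, `case_r` below is `chebGap N θ > 0` for `N ≡ r (mod 4)`,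
after removing the multiple of `2π` from `Nθ`. -/
section NearRightAngle

variable {N δ : ℝ}

lemma near_right_angle_bounds (hN : 0 < N) (hδ : 0 < δ) (hδ' : δ < 11 / 100) :
    0 < sin δ ∧ 2 * sin δ + 1 < 5 / 4 ∧ 99 / 100 ≤ cos δ ∧
      49 / 50 * (N * δ) ≤ N * cos δ * sin δ := by
  have hS : 0 < sin δ := sin_pos_of_pos_of_lt_pi hδ (by linarith [pi_gt_three])
  have hC : 99 / 100 ≤ cos δ := by nlinarith [one_sub_sq_div_two_le_cos (x := δ)]
  have hCS : 49 / 50 * δ ≤ cos δ * sin δ := by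
    nlinarith [cos_mul_sin_ge_sub_cube hδ.le, mul_pos (mul_pos hδ hδ) hδ]
  refine ⟨hS, by linarith [sin_lt hδ], hC, ?_⟩
  nlinarith [mul_le_mul_of_nonneg_left hCS hN.le]

lemma near_right_angle_case_zero (hN : 0 < N) (hδ : 0 < δ) (hδ' : δ < 11 / 100) :
    (2 * sin δ + 1) * -sin (N * δ) < N * cos δ * (cos (N * δ) + sin δ + 1) := by
  obtain ⟨hS, hS', hC, hNCS⟩ := near_right_angle_bounds hN hδ hδ'
  have hs : 0 < N * δ := by positivity
  have hNC : 0 ≤ N * cos δ := by nlinarith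
  have hcos := neg_one_le_cos (N * δ)
  rcases le_or_gt 0 (sin (N * δ)) with hsin | hsin
  · nlinarith [mul_nonneg hNC (by linarith : 0 ≤ cos (N * δ) + 1)]
  · have := pi_lt_of_sin_neg hs.le hsin
    nlinarith [mul_nonneg hNC (by linarith : 0 ≤ cos (N * δ) + 1), neg_one_le_sin (N * δ),
      pi_gt_three]

lemma near_right_angle_case_one (hN : 3 ≤ N) (hδ : 0 < δ) (hδ' : δ < 11 / 100) :
    (2 * sin δ + 1) * cos (N * δ) < N * cos δ * (sin (N * δ) + sin δ + 1) := by
  obtain ⟨hS, hS', hC, hNCS⟩ := near_right_angle_bounds (by linarith : 0 < N) hδ hδ'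
  have hs : 0 < N * δ := by positivity
  have hNC : 0 ≤ N * cos δ := by nlinarith
  have hsin := neg_one_le_sin (N * δ)
  rcases le_or_gt (cos (N * δ)) 0 with hcos | hcos
  · nlinarith [mul_nonneg hNC (by linarith : 0 ≤ sin (N * δ) + 1)]
  · rcases le_or_gt 0 (sin (N * δ)) with hsin' | hsin'
    · nlinarith [cos_le_one (N * δ)]
    · have := pi_lt_of_sin_neg hs.le hsin'
      nlinarith [mul_nonneg hNC (by linarith : 0 ≤ sin (N * δ) + 1), cos_le_one (N * δ),
        pi_gt_three]

lemma near_right_angle_case_three (hN : 3 ≤ N) (hδ : 0 < δ) (hδ' : δ < 11 / 100) :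
    (2 * sin δ + 1) * -cos (N * δ) < N * cos δ * (-sin (N * δ) + sin δ + 1) := by
  obtain ⟨hS, hS', hC, hNCS⟩ := near_right_angle_bounds (by linarith : 0 < N) hδ hδ'
  have hs : 0 < N * δ := by positivity
  have hNC : 0 ≤ N * cos δ := by nlinarith
  have hsin := sin_le_one (N * δ)
  rcases le_or_gt 0 (cos (N * δ)) with hcos | hcos
  · nlinarith [mul_nonneg hNC (by linarith : 0 ≤ 1 - sin (N * δ))]
  · rcases le_or_gt (sin (N * δ)) 0 with hsin' | hsin'
    · nlinarith [neg_one_le_cos (N * δ)]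
    · have := pi_div_two_lt_of_cos_neg hs.le hcos
      nlinarith [mul_nonneg hNC (by linarith : 0 ≤ 1 - sin (N * δ)), neg_one_le_cos (N * δ),
        pi_gt_three]

lemma near_right_angle_case_two (hN : 6 ≤ N) (hδ : 0 < δ) (hδ' : δ < 11 / 100) :
    (2 * sin δ + 1) * sin (N * δ) < N * cos δ * (-cos (N * δ) + sin δ + 1) := by
  obtain ⟨hS, hS', hC, hNCS⟩ := near_right_angle_bounds (by linarith : 0 < N) hδ hδ'
  set s := N * δ with hs_def
  have hs : 0 < s := by positivity
  have hNC : 0 ≤ N * cos δ := by nlinarith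
  have hcos := cos_le_one s
  rcases le_or_gt (sin s) 0 with hsin | hsin
  · nlinarith [mul_nonneg hNC (by linarith : 0 ≤ 1 - cos s)]
  rcases le_or_gt s π with hsπ | hsπ
  · have hs315 : s ≤ 315 / 100 := by linarith [pi_lt_d2]
    have h6δ : 6 * δ ≤ s := mul_le_mul_of_nonneg_right hN hδ.le
    have hlhs : (2 * sin δ + 1) * sin s ≤ (2 * δ + 1) * s :=
      mul_le_mul (by linarith [sin_lt hδ]) (sin_le hs.le) hsin.le (by linarith)
    have hs2 : s ^ 2 ≤ (315 / 100) ^ 2 := by nlinarith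
    have hquartic : 0 ≤ s ^ 2 / 2 - s ^ 4 / 24 := by
      nlinarith [mul_le_mul_of_nonneg_right hs2 (sq_nonneg s), sq_nonneg s]
    have hcos_s : 99 / 100 * (s ^ 2 / 2 - s ^ 4 / 24) ≤ cos δ * (1 - cos s) :=
      mul_le_mul hC (by linarith [cos_le_taylor_four hs.le]) hquartic (by linarith)
    have hpoly :
        (2 * δ + 1) * δ < 99 / 100 * (s ^ 2 / 2 - s ^ 4 / 24) + (δ - 2 * δ ^ 3 / 3) := by
      nlinarith [mul_le_mul h6δ h6δ (by linarith) hs.le,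
        mul_le_mul_of_nonneg_right hδ'.le (sq_nonneg δ),
        mul_le_mul_of_nonneg_right hs2 (sq_nonneg s)]
    have hper : (2 * δ + 1) * δ < cos δ * (1 - cos s) + cos δ * sin δ := by
      linarith [cos_mul_sin_ge_sub_cube hδ.le]
    have := mul_lt_mul_of_pos_left hper (by linarith : 0 < N)
    nlinarith
  · nlinarith [mul_nonneg hNC (by linarith : 0 ≤ 1 - cos s), sin_le_one s, pi_gt_three]

end NearRightAngle

lemma chebGap_nat_pi_div_two_sub (n : ℕ) (δ : ℝ) :
    chebGap n (π / 2 - δ) =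
      n * cos δ * (cos ((n % 4 : ℕ) * (π / 2) - n * δ) + sin δ + 1) -
        (2 * sin δ + 1) * sin ((n % 4 : ℕ) * (π / 2) - n * δ) := by
  have hangle :
      (n : ℝ) * (π / 2 - δ) = (n % 4 : ℕ) * (π / 2) - n * δ + (n / 4 : ℕ) * (2 * π) := by
    have hn : (n : ℝ) = (n % 4 : ℕ) + 4 * (n / 4 : ℕ) := by
      exact_mod_cast (Nat.mod_add_div n 4).symm
    linear_combination (π / 2) * hn
  rw [chebGap, hangle, cos_add_nat_mul_two_pi, sin_add_nat_mul_two_pi, cos_pi_div_two_sub,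
    sin_pi_div_two_sub]

lemma chebGap_pos_of_cos_lt {n : ℕ} (hn : 3 ≤ n) {θ : ℝ} (hθ : 0 < θ) (hθπ : θ ≤ π / 2)
    (hc : cos θ < 1 / 10) (hexcl : n % 4 = 2 → θ ≠ π / 2) : 0 < chebGap n θ := by
  obtain ⟨δ, rfl⟩ : ∃ δ, θ = π / 2 - δ := ⟨π / 2 - θ, by ring⟩
  have hδ0 : 0 ≤ δ := by linarith
  have hδ8 : δ ≤ 8 / 5 := by linarith [pi_lt_d2]
  have hδ' : δ < 11 / 100 := by
    rw [cos_pi_div_two_sub] at hc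
    nlinarith [sin_ge_sub_cube hδ0, mul_nonneg hδ0 (sub_nonneg.2 hδ8),
      mul_nonneg (mul_nonneg hδ0 hδ0) (sub_nonneg.2 hδ8)]
  have hN : (3 : ℝ) ≤ n := by exact_mod_cast hn
  have h2 : (2 : ℝ) * (π / 2) = π := by ring
  have h3 : (3 : ℝ) * (π / 2) = π / 2 + π := by ring
  have hr : n % 4 < 4 := Nat.mod_lt _ (by norm_num)
  rw [chebGap_nat_pi_div_two_sub, sub_pos]
  rcases hδ0.eq_or_lt with rfl | hδ
  · have : n % 4 ≠ 2 := fun h => hexcl h (by ring)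
    interval_cases n % 4 <;> simp [h3] at this ⊢ <;> linarith
  · interval_cases h : n % 4
    · simpa using near_right_angle_case_zero (by linarith) hδ hδ'
    · simpa [cos_sub, sin_sub] using near_right_angle_case_one hN hδ hδ'
    · have h6 : (6 : ℝ) ≤ n := by exact_mod_cast (by omega : 6 ≤ n)
      simpa [cos_sub, sin_sub, h2] using near_right_angle_case_two h6 hδ hδ'
    · simpa [cos_sub, sin_sub, h3] using near_right_angle_case_three hN hδ hδ'

lemma chebGap_pos {n : ℕ} (hn : 3 ≤ n) {θ : ℝ} (hθ : 0 < θ) (hθπ : θ ≤ π / 2)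
    (hexcl : n % 4 = 2 → θ ≠ π / 2) : 0 < chebGap n θ := by
  have hN : (3 : ℝ) ≤ n := by exact_mod_cast hn
  rcases lt_or_ge (cos θ) (1 / 10) with hc | hc
  · exact chebGap_pos_of_cos_lt hn hθ hθπ hc hexcl
  rcases le_or_gt ((n : ℝ) * θ) (11 / 5) with ht | ht
  · exact chebGap_pos_of_mul_le hN hθ ht
  · exact chebGap_pos_of_le_mul hN hθ hθπ ht.le hc

lemma chebPhi_pos {n : ℕ} (hn : 3 ≤ n) {x : ℝ} (hx₀ : 0 ≤ x) (hx₁ : x < 1)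
    (hexcl : n % 4 = 2 → x ≠ 0) : 0 < chebPhi n x := by
  set θ := arccos x
  have hθ : 0 < θ := arccos_pos.2 hx₁
  have hθπ : θ ≤ π / 2 := arccos_le_pi_div_two.2 hx₀
  have hsin : 0 < sin θ := sin_pos_of_pos_of_lt_pi hθ (by linarith [pi_pos])
  have hcos : cos θ = x := cos_arccos (by linarith) hx₁.le
  have hgap := chebGap_pos hn hθ hθπ fun h hπ => hexcl h (by rw [← hcos, hπ, cos_pi_div_two])
  rw [← chebPhi_cos_mul (by omega) hsin.ne', hcos] at hgap
  exact pos_of_mul_pos_left hgap (by positivity)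

lemma chebPhi_zero_of_mod_four_eq_two {n : ℕ} (hn : n % 4 = 2) : chebPhi n 0 = 0 := by
  have hn' : (n : ℝ) ≠ 0 := by exact_mod_cast (by omega : n ≠ 0)
  have h := chebPhi_cos_mul (n := n) (by omega) (θ := π / 2 - 0) (by simp)
  rw [chebGap_nat_pi_div_two_sub, hn] at h
  have h2 : (2 : ℝ) * (π / 2) = π := by ring
  simpa [h2, hn'] using h

/-- For every integer `n ≥ 3` and `x ∈ [0,1]`,
`T_n(x) + x + 1 - ((2x+1)/n²) T_n'(x) ≥ 0`, with equality only at `x = 1` and,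
if `n ≡ 2 (mod 4)`, also at `x = 0`. -/
theorem phi_nonneg (n : ℕ) (hn : 3 ≤ n) (x : ℝ) (hx : x ∈ Set.Icc (0 : ℝ) 1) :
    0 ≤ (chebT n).eval x + x + 1 - (2 * x + 1) / (n : ℝ) ^ 2 * (derivative (chebT n)).eval x ∧
    ((chebT n).eval x + x + 1 - (2 * x + 1) / (n : ℝ) ^ 2 * (derivative (chebT n)).eval x = 0 ↔
      x = 1 ∨ (n % 4 = 2 ∧ x = 0)) := by
  change 0 ≤ chebPhi n x ∧ (chebPhi n x = 0 ↔ _)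
  obtain ⟨hx₀, hx₁⟩ := hx
  rcases hx₁.eq_or_lt with rfl | hx₁
  · simp [chebPhi_one (by omega : n ≠ 0)]
  by_cases hzero : n % 4 = 2 ∧ x = 0
  · obtain ⟨h2, rfl⟩ := hzero
    simp [chebPhi_zero_of_mod_four_eq_two h2, h2]
  · have hpos := chebPhi_pos hn hx₀ hx₁ fun h2 hx => hzero ⟨h2, hx⟩
    refine ⟨hpos.le, iff_of_false hpos.ne' ?_⟩
    rintro (rfl | h)
    exacts [lt_irrefl _ hx₁, hzero h]
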